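/- arXiv:2510.09246 — 3 statements merged into one kernel-verified Lean document; each statement's English description precedes it below -/
import Mathlib

section
/- Let W_k ≠ 0. Then for l_pred = (t_pred, l')ᵀ ∈ ℒ the following are equivalent: (i) there exists p₀ ∈ 𝒫 with d(l_pred, p₀) = min_{l∈ℒ, p∈𝒫} d(l,p); (ii) W_k t_pred = −proj_{⟨W_k⟩}(W' l'), where ⟨W_k⟩ is the column space of W_k and proj_{⟨W_k⟩} is the orthogonal projection onto it. Moreover at least one such t_pred ∈ ℝ^k exists. -/
/-!
`P (PᵀP)⁻¹ Pᵀ` is the orthogonal projection `Q` onto `𝒫`, so `W = Q - 1`: the point of `𝒫`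
nearest to `l` is `Q l`, at distance `‖W l‖`. For `l = (t, l')` this residual is
`W_k t + W' l'`, which runs over the translate `W' l' + ⟨W_k⟩`; by Pythagoras its norm is least,
namely `‖W' l' - proj_{⟨W_k⟩}(W' l')‖`, exactly when `W_k t = -proj_{⟨W_k⟩}(W' l')`.
-/

open Matrix

noncomputable def setDist {X : Type*} [MetricSpace X] (A B : Set X) : ℝ :=
  sInf (Set.image2 dist A B)

open Set WithLp

namespace Submodule

variable {𝕜 F : Type*} [RCLike 𝕜] [NormedAddCommGroup F] [InnerProductSpace 𝕜 F]
  (K : Submodule 𝕜 F) [K.HasOrthogonalProjection]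

theorem norm_sub_mul_self_eq_of_mem (v : F) {w : F} (hw : w ∈ K) :
    ‖v - w‖ * ‖v - w‖ = ‖v - K.starProjection v‖ * ‖v - K.starProjection v‖ +
      ‖K.starProjection v - w‖ * ‖K.starProjection v - w‖ := by
  have horth : inner 𝕜 (v - K.starProjection v) (K.starProjection v - w) = 0 :=
    (K.mem_orthogonal' _).mp (K.sub_starProjection_mem_orthogonal v) _
      (K.sub_mem (K.starProjection_apply_mem v) hw)
  rw [← norm_add_sq_eq_norm_sq_add_norm_sq_of_inner_eq_zero _ _ horth, sub_add_sub_cancel]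

theorem norm_sub_starProjection_le (v : F) {w : F} (hw : w ∈ K) :
    ‖v - K.starProjection v‖ ≤ ‖v - w‖ := by
  have := K.norm_sub_mul_self_eq_of_mem v hw
  nlinarith [mul_self_nonneg ‖K.starProjection v - w‖, norm_nonneg (v - w),
    norm_nonneg (v - K.starProjection v)]

theorem norm_sub_eq_norm_sub_starProjection_iff (v : F) {w : F} (hw : w ∈ K) :
    ‖v - w‖ = ‖v - K.starProjection v‖ ↔ w = K.starProjection v := by
  refine ⟨fun h => ?_, fun h => h ▸ rfl⟩
  have := K.norm_sub_mul_self_eq_of_mem v hw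
  rw [h, left_eq_add, mul_self_eq_zero, norm_eq_zero, sub_eq_zero] at this
  exact this.symm

end Submodule

section ResidualFamily

variable {𝕜 F ι : Type*} [RCLike 𝕜] [NormedAddCommGroup F] [InnerProductSpace 𝕜 F]
  (K U : Submodule 𝕜 F) [K.HasOrthogonalProjection] [U.HasOrthogonalProjection]
  {x u : ι → F} {v : F}

theorem norm_sub_starProjection_le_dist {i : ι} (hu : u i ∈ U)
    (hres : K.starProjection (x i) - x i = v - u i) {p : F} (hp : p ∈ K) :
    ‖v - U.starProjection v‖ ≤ dist (x i) p := calc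
  ‖v - U.starProjection v‖ ≤ ‖v - u i‖ := U.norm_sub_starProjection_le v hu
  _ = ‖x i - K.starProjection (x i)‖ := by rw [← hres, norm_sub_rev]
  _ ≤ dist (x i) p := dist_eq_norm (x i) p ▸ K.norm_sub_starProjection_le _ hp

theorem setDist_range_eq (hu : range u = U)
    (hres : ∀ i, K.starProjection (x i) - x i = v - u i) :
    setDist (range x) K = ‖v - U.starProjection v‖ := by
  obtain ⟨i, hi⟩ : U.starProjection v ∈ range u := hu ▸ U.starProjection_apply_mem v
  refine IsLeast.csInf_eq ⟨⟨x i, mem_range_self i, K.starProjection (x i),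
    K.starProjection_apply_mem _, ?_⟩, ?_⟩
  · rw [dist_comm, dist_eq_norm, hres, hi]
  · rintro _ ⟨_, ⟨j, rfl⟩, p, hp, rfl⟩
    exact norm_sub_starProjection_le_dist K U (hu.subset (mem_range_self j)) (hres j) hp

theorem exists_dist_eq_setDist_range_iff (hu : range u = U)
    (hres : ∀ i, K.starProjection (x i) - x i = v - u i) (i : ι) :
    (∃ p ∈ K, dist (x i) p = setDist (range x) K) ↔ u i = U.starProjection v := by
  have hui : u i ∈ U := hu.subset (mem_range_self i)
  rw [setDist_range_eq K U hu hres, ← U.norm_sub_eq_norm_sub_starProjection_iff v hui]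
  constructor
  · rintro ⟨p, hp, hd⟩
    refine le_antisymm ?_ (U.norm_sub_starProjection_le v hui)
    calc ‖v - u i‖ = ‖x i - K.starProjection (x i)‖ := by rw [← hres, norm_sub_rev]
      _ ≤ dist (x i) p := dist_eq_norm (x i) p ▸ K.norm_sub_starProjection_le _ hp
      _ = _ := hd
  · intro h
    exact ⟨K.starProjection (x i), K.starProjection_apply_mem _,
      by rw [dist_comm, dist_eq_norm, hres, h]⟩

end ResidualFamily

section ColumnSpace

variable {m n : Type*}

theorem coe_span_range_toLp_transpose {𝕜 : Type*} [RCLike 𝕜] [Fintype n] (M : Matrix m n 𝕜) :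
    (Submodule.span 𝕜 (range fun j => toLp 2 (Mᵀ j)) : Set (EuclideanSpace 𝕜 m)) =
      range fun y => toLp 2 (M *ᵥ y) := by
  have hsum : ∀ c : n → 𝕜, ∑ j, c j • toLp 2 (Mᵀ j) = toLp 2 (M *ᵥ c) := fun c => by
    ext i
    simp [mulVec, dotProduct, mul_comm]
  ext x
  simp only [SetLike.mem_coe, Submodule.mem_span_range_iff_exists_fun, hsum, mem_range]

theorem gram_toLp_transpose [Fintype m] (P : Matrix m n ℝ) :
    gram ℝ (fun j => toLp 2 (Pᵀ j) : n → EuclideanSpace ℝ m) = Pᵀ * P := by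
  ext i j
  simp [mul_apply, EuclideanSpace.inner_toLp_toLp, dotProduct, mul_comm]

variable [Fintype m] [Fintype n] [DecidableEq n] {P : Matrix m n ℝ}
  (hP : LinearIndependent ℝ (fun j => toLp 2 (Pᵀ j) : n → EuclideanSpace ℝ m))
include hP

theorem isUnit_det_transpose_mul_self : IsUnit (Pᵀ * P).det :=
  (gram_toLp_transpose P ▸ det_gram_ne_zero_iff_linearIndependent.mpr hP).isUnit

theorem starProjection_span_toLp_transpose (x : EuclideanSpace ℝ m) :
    (Submodule.span ℝ (range fun j => toLp 2 (Pᵀ j))).starProjection x =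
      toLp 2 ((P * (Pᵀ * P)⁻¹ * Pᵀ) *ᵥ ofLp x) := by
  have hPtQ : Pᵀ * (P * (Pᵀ * P)⁻¹ * Pᵀ) = Pᵀ := by
    rw [← Matrix.mul_assoc, ← Matrix.mul_assoc,
      mul_nonsing_inv _ (isUnit_det_transpose_mul_self hP), Matrix.one_mul]
  apply Submodule.eq_starProjection_of_mem_of_inner_eq_zero
  · rw [← SetLike.mem_coe, coe_span_range_toLp_transpose]
    exact ⟨((Pᵀ * P)⁻¹ * Pᵀ) *ᵥ ofLp x, by simp only [mulVec_mulVec, Matrix.mul_assoc]⟩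
  · intro w hw
    rw [← SetLike.mem_coe, coe_span_range_toLp_transpose] at hw
    obtain ⟨y, rfl⟩ := hw
    rw [← toLp_ofLp 2 x, ← toLp_sub, EuclideanSpace.inner_toLp_toLp, star_trivial, dotProduct_comm,
      dotProduct_mulVec, ← mulVec_transpose, mulVec_sub, mulVec_mulVec, hPtQ, sub_self,
      zero_dotProduct]

end ColumnSpace

theorem Matrix.mulVec_finAppend {m R : Type*} [NonUnitalNonAssocSemiring R] {k r : ℕ}
    (M : Matrix m (Fin (k + r)) R) (t : Fin k → R) (s : Fin r → R) :
    M *ᵥ Fin.append t s = (fun i j => M i (Fin.castAdd r j) : Matrix m (Fin k) R) *ᵥ t +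
      (fun i j => M i (Fin.natAdd k j) : Matrix m (Fin r) R) *ᵥ s := by
  ext i
  simp [mulVec, dotProduct, Fin.sum_univ_add]

theorem stmt_7_general {k r n : ℕ}
    (P : Matrix (Fin (k + r)) (Fin n) ℝ)
    (hP : LinearIndependent ℝ (fun j : Fin n => (WithLp.toLp 2 (Pᵀ j) : EuclideanSpace ℝ (Fin (k + r)))))
    (Psub : Submodule ℝ (EuclideanSpace ℝ (Fin (k + r))))
    (hPsub : Psub = Submodule.span ℝ
      (Set.range fun j : Fin n => (WithLp.toLp 2 (Pᵀ j) : EuclideanSpace ℝ (Fin (k + r)))))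
    (W : Matrix (Fin (k + r)) (Fin (k + r)) ℝ)
    (hW : W = P * (Pᵀ * P)⁻¹ * Pᵀ - 1)
    (Wk : Matrix (Fin (k + r)) (Fin k) ℝ) (hWk : Wk = fun i j => W i (Fin.castAdd r j))
    (W' : Matrix (Fin (k + r)) (Fin r) ℝ) (hW' : W' = fun i j => W i (Fin.natAdd k j))
    (WkSpan : Submodule ℝ (EuclideanSpace ℝ (Fin (k + r))))
    (hWkSpan : WkSpan = Submodule.span ℝ
      (Set.range fun j : Fin k => (WithLp.toLp 2 (Wkᵀ j) : EuclideanSpace ℝ (Fin (k + r)))))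
    (l' : Fin r → ℝ)
    (L : Set (EuclideanSpace ℝ (Fin (k + r))))
    (hL : L = {x : EuclideanSpace ℝ (Fin (k + r)) | ∃ t : Fin k → ℝ, x = Fin.append t l'}) :
    (∀ (tpred : Fin k → ℝ) (lpred : EuclideanSpace ℝ (Fin (k + r))),
      lpred = Fin.append tpred l' →
      ((∃ p₀ ∈ Psub, dist lpred p₀ = setDist L ↑Psub) ↔
        (WithLp.toLp 2 (Wk.mulVec tpred) : EuclideanSpace ℝ (Fin (k + r))) =
          -(Submodule.orthogonalProjectionOnto WkSpan (WithLp.toLp 2 (W'.mulVec l') : EuclideanSpace ℝ (Fin (k + r))) :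
            EuclideanSpace ℝ (Fin (k + r))))) ∧
    ∃ tpred : Fin k → ℝ,
      (WithLp.toLp 2 (Wk.mulVec tpred) : EuclideanSpace ℝ (Fin (k + r))) =
        -(Submodule.orthogonalProjectionOnto WkSpan (WithLp.toLp 2 (W'.mulVec l') : EuclideanSpace ℝ (Fin (k + r))) :
          EuclideanSpace ℝ (Fin (k + r))) := by
  have hWproj : ∀ x, Psub.starProjection x - x = toLp 2 (W *ᵥ ofLp x) := fun x => by
    rw [hPsub, starProjection_span_toLp_transpose hP, hW, sub_mulVec, one_mulVec, toLp_sub,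
      toLp_ofLp]
  set v : EuclideanSpace ℝ (Fin (k + r)) := toLp 2 (W' *ᵥ l')
  have hcols : range (fun t => toLp 2 (Wk *ᵥ t)) = (WkSpan : Set _) := by
    rw [hWkSpan, coe_span_range_toLp_transpose]
  have hres : ∀ t, Psub.starProjection (toLp 2 (Fin.append t l')) - toLp 2 (Fin.append t l') =
      v - toLp 2 (Wk *ᵥ -t) := by
    intro t
    rw [hWproj, ofLp_toLp, mulVec_finAppend, ← hWk, ← hW', mulVec_neg, toLp_add, toLp_neg,
      sub_neg_eq_add]
    exact add_comm _ _
  have hL' : L = range fun t => toLp 2 (Fin.append t l') := by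
    ext x
    rw [hL]
    exact ⟨fun ⟨t, ht⟩ => ⟨t, by rw [← toLp_ofLp 2 x, ht]⟩, fun ⟨t, ht⟩ => ⟨t, ht ▸ rfl⟩⟩
  have hu : range (fun t => toLp 2 (Wk *ᵥ -t)) = WkSpan := (neg_surjective.range_comp _).trans hcols
  subst hL'
  refine ⟨fun t lpred hl => ?_, ?_⟩
  · obtain rfl : lpred = toLp 2 (Fin.append t l') := congrArg (toLp 2) hl
    rw [exists_dist_eq_setDist_range_iff Psub WkSpan hu hres,
      mulVec_neg, toLp_neg, neg_eq_iff_eq_neg]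
    rfl
  · obtain ⟨t, ht⟩ : -WkSpan.starProjection v ∈ range fun t => toLp 2 (Wk *ᵥ t) :=
      hcols ▸ WkSpan.neg_mem (WkSpan.starProjection_apply_mem v)
    exact ⟨t, ht⟩

/-- Proposition 4, case 2 (`W_k ≠ 0`): `l_pred = (t_pred, l')ᵀ ∈ ℒ` attains
`d(ℒ,𝒫) = min_{l∈ℒ,p∈𝒫} d(l,p)` (i.e. there is `p₀ ∈ 𝒫` with `d(l_pred,p₀) = d(ℒ,𝒫)`)
iff `W_k t_pred = −proj_{⟨W_k⟩}(W'l')`, where `⟨W_k⟩` is the column space of `W_k`;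
moreover at least one such `t_pred ∈ ℝ^k` exists. -/
theorem stmt_7 {k r n : ℕ} (hk : 1 ≤ k) (hr : 1 ≤ r)
    (P : Matrix (Fin (k + r)) (Fin n) ℝ)
    (hP : LinearIndependent ℝ (fun j : Fin n => (WithLp.toLp 2 (Pᵀ j) : EuclideanSpace ℝ (Fin (k + r)))))
    (Psub : Submodule ℝ (EuclideanSpace ℝ (Fin (k + r))))
    (hPsub : Psub = Submodule.span ℝ
      (Set.range fun j : Fin n => (WithLp.toLp 2 (Pᵀ j) : EuclideanSpace ℝ (Fin (k + r)))))
    (W : Matrix (Fin (k + r)) (Fin (k + r)) ℝ)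
    (hW : W = P * (Pᵀ * P)⁻¹ * Pᵀ - 1)
    (Wk : Matrix (Fin (k + r)) (Fin k) ℝ) (hWk : Wk = fun i j => W i (Fin.castAdd r j))
    (W' : Matrix (Fin (k + r)) (Fin r) ℝ) (hW' : W' = fun i j => W i (Fin.natAdd k j))
    (WkSpan : Submodule ℝ (EuclideanSpace ℝ (Fin (k + r))))
    (hWkSpan : WkSpan = Submodule.span ℝ
      (Set.range fun j : Fin k => (WithLp.toLp 2 (Wkᵀ j) : EuclideanSpace ℝ (Fin (k + r)))))
    (l' : Fin r → ℝ)
    (L : Set (EuclideanSpace ℝ (Fin (k + r))))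
    (hL : L = {x : EuclideanSpace ℝ (Fin (k + r)) | ∃ t : Fin k → ℝ, x = Fin.append t l'})
    (hWk0 : Wk ≠ 0) :
    (∀ (tpred : Fin k → ℝ) (lpred : EuclideanSpace ℝ (Fin (k + r))),
      lpred = Fin.append tpred l' →
      ((∃ p₀ ∈ Psub, dist lpred p₀ = setDist L ↑Psub) ↔
        (WithLp.toLp 2 (Wk.mulVec tpred) : EuclideanSpace ℝ (Fin (k + r))) =
          -(Submodule.orthogonalProjectionOnto WkSpan (WithLp.toLp 2 (W'.mulVec l') : EuclideanSpace ℝ (Fin (k + r))) :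
            EuclideanSpace ℝ (Fin (k + r))))) ∧
    ∃ tpred : Fin k → ℝ,
      (WithLp.toLp 2 (Wk.mulVec tpred) : EuclideanSpace ℝ (Fin (k + r))) =
        -(Submodule.orthogonalProjectionOnto WkSpan (WithLp.toLp 2 (W'.mulVec l') : EuclideanSpace ℝ (Fin (k + r))) :
          EuclideanSpace ℝ (Fin (k + r))) :=
  stmt_7_general P hP Psub hPsub W hW Wk hWk W' hW' WkSpan hWkSpan l' L hL
end

section
/- Let W_k have rank k, and let W_{k,L} be any left inverse of W_k (i.e., W_{k,L} W_k = E_k). Then the unique t_pred ∈ ℝ^k for which l_pred = (t_pred, l')ᵀ ∈ ℒ attains d(ℒ, 𝒫) (i.e., there exists p₀ ∈ 𝒫 with d(l_pred, p₀) = min_{l∈ℒ, p∈𝒫} d(l,p)) is given by t_pred = −W_{k,L} · W_k(W_kᵀW_k)⁻¹W_kᵀ · W' l'. -/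
/-!
Both minimisations are least-squares problems. For a matrix `A` with injective `A *ᵥ ·`, the
normal equations give `‖A y - b‖² = ‖A (y - y₀)‖² + ‖A y₀ - b‖²` with `y₀ = (AᵀA)⁻¹Aᵀ b`, so
`y₀` is the unique minimiser of `‖A y - b‖`. Applied to `A = P` this shows that the distance
from `x` to `𝒫` is `‖W x‖`; for `x = (t, l')` we have `W x = W_k t + W' l'`, and applied to
`A = W_k` (injective, having a left inverse) it shows that `t ↦ d((t, l'), 𝒫)` has the unique
minimiser `t₀ = -(W_kᵀW_k)⁻¹W_kᵀW' l'`, which is the stated formula since `W_{k,L} W_k = E_k`.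
-/

open Matrix

lemma setDist_eq_dist_of_forall_le {X : Type*} [MetricSpace X] {A B : Set X} {a b : X}
    (ha : a ∈ A) (hb : b ∈ B) (h : ∀ x ∈ A, ∀ y ∈ B, dist a b ≤ dist x y) :
    setDist A B = dist a b :=
  IsLeast.csInf_eq ⟨Set.mem_image2_of_mem ha hb, Set.forall_mem_image2.2 h⟩

namespace Matrix

variable {m n : Type*}

lemma mulVec_finAppend_s8 {R : Type*} [NonUnitalNonAssocSemiring R] {k r : ℕ}
    (M : Matrix m (Fin (k + r)) R) (t : Fin k → R) (s : Fin r → R) :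
    M *ᵥ Fin.append t s =
      (fun i j => M i (Fin.castAdd r j)) *ᵥ t + (fun i j => M i (Fin.natAdd k j)) *ᵥ s := by
  ext i
  simp only [mulVec, dotProduct, Fin.sum_univ_add, Fin.append_left, Fin.append_right, Pi.add_apply]

lemma mem_span_range_toLp_col_iff [Fintype n] (P : Matrix m n ℝ) (p : EuclideanSpace ℝ m) :
    p ∈ Submodule.span ℝ (Set.range fun j => WithLp.toLp 2 (Pᵀ j)) ↔
      ∃ y, WithLp.toLp 2 (P *ᵥ y) = p := by
  have hsum : ∀ y : n → ℝ, ∑ j, y j • WithLp.toLp 2 (Pᵀ j) = WithLp.toLp 2 (P *ᵥ y) := by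
    intro y
    ext i
    simp [mulVec, dotProduct, mul_comm]
  simp only [Submodule.mem_span_range_iff_exists_fun, hsum]

variable [Fintype m] [Fintype n] [DecidableEq n]

lemma isUnit_det_transpose_mul_self {A : Matrix m n ℝ} (hA : Function.Injective A.mulVec) :
    IsUnit (Aᵀ * A).det :=
  (isUnit_iff_isUnit_det _).1 (PosDef.conjTranspose_mul_self A hA).isUnit

noncomputable def leastSquares (A : Matrix m n ℝ) (b : m → ℝ) : n → ℝ :=
  ((Aᵀ * A)⁻¹ * Aᵀ) *ᵥ b

variable {A : Matrix m n ℝ}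

lemma mulVec_leastSquares_sub [DecidableEq m] (A : Matrix m n ℝ) (b : m → ℝ) :
    A *ᵥ leastSquares A b - b = (A * (Aᵀ * A)⁻¹ * Aᵀ - 1) *ᵥ b := by
  rw [sub_mulVec, one_mulVec, leastSquares, mulVec_mulVec, Matrix.mul_assoc]

lemma transpose_mulVec_mulVec_leastSquares_sub (hA : IsUnit (Aᵀ * A).det) (b : m → ℝ) :
    Aᵀ *ᵥ (A *ᵥ leastSquares A b - b) = 0 := by
  rw [mulVec_sub, leastSquares, mulVec_mulVec, mulVec_mulVec, ← Matrix.mul_assoc,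
    mul_nonsing_inv _ hA, Matrix.one_mul, sub_self]

lemma norm_sq_mulVec_sub (hA : IsUnit (Aᵀ * A).det) (b : m → ℝ) (y : n → ℝ) :
    ‖WithLp.toLp 2 (A *ᵥ y - b)‖ ^ 2 =
      ‖WithLp.toLp 2 (A *ᵥ (y - leastSquares A b))‖ ^ 2 +
        ‖WithLp.toLp 2 (A *ᵥ leastSquares A b - b)‖ ^ 2 := by
  have hsplit : A *ᵥ y - b = A *ᵥ (y - leastSquares A b) + (A *ᵥ leastSquares A b - b) := by
    rw [mulVec_sub]; abel
  have horth : inner ℝ (WithLp.toLp 2 (A *ᵥ (y - leastSquares A b)))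
      (WithLp.toLp 2 (A *ᵥ leastSquares A b - b)) = 0 := by
    rw [EuclideanSpace.inner_toLp_toLp, star_trivial, dotProduct_mulVec, ← mulVec_transpose,
      transpose_mulVec_mulVec_leastSquares_sub hA, zero_dotProduct]
  rw [hsplit, WithLp.toLp_add, sq, sq, sq, norm_add_sq_eq_norm_sq_add_norm_sq_real horth]

lemma norm_mulVec_leastSquares_sub_le (hA : IsUnit (Aᵀ * A).det) (b : m → ℝ) (y : n → ℝ) :
    ‖WithLp.toLp 2 (A *ᵥ leastSquares A b - b)‖ ≤ ‖WithLp.toLp 2 (A *ᵥ y - b)‖ := by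
  rw [← sq_le_sq₀ (norm_nonneg _) (norm_nonneg _), norm_sq_mulVec_sub hA b y]
  exact le_add_of_nonneg_left (sq_nonneg _)

lemma eq_leastSquares_of_norm_mulVec_sub_le (hA : Function.Injective A.mulVec) {b : m → ℝ}
    {y : n → ℝ} (h : ‖WithLp.toLp 2 (A *ᵥ y - b)‖ ≤ ‖WithLp.toLp 2 (A *ᵥ leastSquares A b - b)‖) :
    y = leastSquares A b := by
  have hsq := norm_sq_mulVec_sub (isUnit_det_transpose_mul_self hA) b y
  have hzero : ‖WithLp.toLp 2 (A *ᵥ (y - leastSquares A b))‖ = 0 := by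
    nlinarith [norm_nonneg (WithLp.toLp 2 (A *ᵥ (y - leastSquares A b))),
      norm_nonneg (WithLp.toLp 2 (A *ᵥ y - b))]
  rw [norm_eq_zero, WithLp.toLp_eq_zero, mulVec_sub, sub_eq_zero] at hzero
  exact hA hzero

lemma norm_mulVec_leastSquares_sub_le_dist (hA : IsUnit (Aᵀ * A).det) (b : m → ℝ)
    {p : EuclideanSpace ℝ m} (hp : p ∈ Submodule.span ℝ (Set.range fun j => WithLp.toLp 2 (Aᵀ j))) :
    ‖WithLp.toLp 2 (A *ᵥ leastSquares A b - b)‖ ≤ dist (WithLp.toLp 2 b) p := by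
  obtain ⟨y, rfl⟩ := (mem_span_range_toLp_col_iff A p).1 hp
  rw [dist_comm, dist_eq_norm, ← WithLp.toLp_sub]
  exact norm_mulVec_leastSquares_sub_le hA b y

lemma mulVec_eq_leastSquares_of_mul_eq_one {B : Matrix n m ℝ} (hB : B * A = 1) (b : m → ℝ) :
    (B * (A * (Aᵀ * A)⁻¹ * Aᵀ)) *ᵥ b = leastSquares A b := by
  rw [Matrix.mul_assoc A, ← Matrix.mul_assoc B, hB, Matrix.one_mul, leastSquares]

end Matrix

theorem stmt_8_general {k r n : ℕ}
    (P : Matrix (Fin (k + r)) (Fin n) ℝ)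
    (hP : LinearIndependent ℝ (fun j : Fin n => (WithLp.toLp 2 (Pᵀ j) : EuclideanSpace ℝ (Fin (k + r)))))
    (Psub : Submodule ℝ (EuclideanSpace ℝ (Fin (k + r))))
    (hPsub : Psub = Submodule.span ℝ
      (Set.range fun j : Fin n => (WithLp.toLp 2 (Pᵀ j) : EuclideanSpace ℝ (Fin (k + r)))))
    (W : Matrix (Fin (k + r)) (Fin (k + r)) ℝ)
    (hW : W = P * (Pᵀ * P)⁻¹ * Pᵀ - 1)
    (Wk : Matrix (Fin (k + r)) (Fin k) ℝ) (hWk : Wk = fun i j => W i (Fin.castAdd r j))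
    (W' : Matrix (Fin (k + r)) (Fin r) ℝ) (hW' : W' = fun i j => W i (Fin.natAdd k j))
    (l' : Fin r → ℝ)
    (L : Set (EuclideanSpace ℝ (Fin (k + r))))
    (hL : L = {x : EuclideanSpace ℝ (Fin (k + r)) | ∃ t : Fin k → ℝ, x = Fin.append t l'})
    (WkL : Matrix (Fin k) (Fin (k + r)) ℝ) (hWkL : WkL * Wk = 1) :
    ∀ (tpred : Fin k → ℝ) (lpred : EuclideanSpace ℝ (Fin (k + r))),
      lpred = Fin.append tpred l' →
      ((∃ p₀ ∈ Psub, dist lpred p₀ = setDist L ↑Psub) ↔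
        tpred = -((WkL * (Wk * (Wkᵀ * Wk)⁻¹ * Wkᵀ)).mulVec (W'.mulVec l'))) := by
  intro tpred lpred hlpred
  obtain rfl : lpred = WithLp.toLp 2 (Fin.append tpred l') := WithLp.ofLp_injective 2 hlpred
  have hPdet : IsUnit (Pᵀ * P).det := isUnit_det_transpose_mul_self <| mulVec_injective_iff.2 <|
    hP.of_comp (WithLp.linearEquiv 2 ℝ (Fin (k + r) → ℝ)).symm.toLinearMap
  have hWkinj : Function.Injective Wk.mulVec :=
    Function.LeftInverse.injective (g := (WkL *ᵥ ·)) fun v => by simp [mulVec_mulVec, hWkL]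
  set b := -(W' *ᵥ l') with hb
  have hWappend (t : Fin k → ℝ) : W *ᵥ Fin.append t l' = Wk *ᵥ t - b := by
    rw [hb, sub_neg_eq_add, mulVec_finAppend_s8, ← hWk, ← hW']
  have hdist_le (t : Fin k → ℝ) (p : EuclideanSpace ℝ (Fin (k + r))) (hp : p ∈ Psub) :
      ‖WithLp.toLp 2 (Wk *ᵥ t - b)‖ ≤ dist (WithLp.toLp 2 (Fin.append t l')) p := by
    have := norm_mulVec_leastSquares_sub_le_dist hPdet (Fin.append t l') (hPsub ▸ hp)
    rwa [mulVec_leastSquares_sub, ← hW, hWappend] at this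
  set t₀ := leastSquares Wk b
  set p₀ := WithLp.toLp 2 (P *ᵥ leastSquares P (Fin.append t₀ l'))
  have hp₀ : p₀ ∈ Psub := hPsub ▸ (mem_span_range_toLp_col_iff P _).2 ⟨_, rfl⟩
  have hdist₀ : dist (WithLp.toLp 2 (Fin.append t₀ l')) p₀ = ‖WithLp.toLp 2 (Wk *ᵥ t₀ - b)‖ := by
    rw [dist_comm, dist_eq_norm, ← WithLp.toLp_sub, mulVec_leastSquares_sub, ← hW, hWappend]
  have hsetDist : setDist L Psub = ‖WithLp.toLp 2 (Wk *ᵥ t₀ - b)‖ := by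
    rw [← hdist₀]
    refine setDist_eq_dist_of_forall_le (hL ▸ ⟨t₀, rfl⟩) hp₀ fun x hx p hp => ?_
    obtain ⟨t, ht⟩ := hL ▸ hx
    obtain rfl : x = WithLp.toLp 2 (Fin.append t l') := WithLp.ofLp_injective 2 ht
    rw [hdist₀]
    exact (norm_mulVec_leastSquares_sub_le (isUnit_det_transpose_mul_self hWkinj) _ t).trans
      (hdist_le t p hp)
  rw [← mulVec_neg, mulVec_eq_leastSquares_of_mul_eq_one hWkL]
  constructor
  · rintro ⟨p, hp, hdist⟩
    exact eq_leastSquares_of_norm_mulVec_sub_le hWkinj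
      ((hdist_le _ p hp).trans (hdist.trans hsetDist).le)
  · rintro rfl
    exact ⟨p₀, hp₀, hdist₀.trans hsetDist.symm⟩

/-- Proposition 4, case 2 with `rank(W_k) = k`: for any left inverse `W_{k,L}` of `W_k`
(`W_{k,L}W_k = E_k`), the unique `t_pred ∈ ℝ^k` for which `l_pred = (t_pred,l')ᵀ ∈ ℒ` attains
`d(ℒ,𝒫)` is `t_pred = −W_{k,L}·W_k(W_kᵀW_k)⁻¹W_kᵀ·W'l'`. -/
theorem stmt_8 {k r n : ℕ} (hk : 1 ≤ k) (hr : 1 ≤ r)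
    (P : Matrix (Fin (k + r)) (Fin n) ℝ)
    (hP : LinearIndependent ℝ (fun j : Fin n => (WithLp.toLp 2 (Pᵀ j) : EuclideanSpace ℝ (Fin (k + r)))))
    (Psub : Submodule ℝ (EuclideanSpace ℝ (Fin (k + r))))
    (hPsub : Psub = Submodule.span ℝ
      (Set.range fun j : Fin n => (WithLp.toLp 2 (Pᵀ j) : EuclideanSpace ℝ (Fin (k + r)))))
    (W : Matrix (Fin (k + r)) (Fin (k + r)) ℝ)
    (hW : W = P * (Pᵀ * P)⁻¹ * Pᵀ - 1)
    (Wk : Matrix (Fin (k + r)) (Fin k) ℝ) (hWk : Wk = fun i j => W i (Fin.castAdd r j))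
    (W' : Matrix (Fin (k + r)) (Fin r) ℝ) (hW' : W' = fun i j => W i (Fin.natAdd k j))
    (l' : Fin r → ℝ)
    (L : Set (EuclideanSpace ℝ (Fin (k + r))))
    (hL : L = {x : EuclideanSpace ℝ (Fin (k + r)) | ∃ t : Fin k → ℝ, x = Fin.append t l'})
    (hrank : Wk.rank = k)
    (WkL : Matrix (Fin k) (Fin (k + r)) ℝ) (hWkL : WkL * Wk = 1) :
    ∀ (tpred : Fin k → ℝ) (lpred : EuclideanSpace ℝ (Fin (k + r))),
      lpred = Fin.append tpred l' →
      ((∃ p₀ ∈ Psub, dist lpred p₀ = setDist L ↑Psub) ↔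
        tpred = -((WkL * (Wk * (Wkᵀ * Wk)⁻¹ * Wkᵀ)).mulVec (W'.mulVec l'))) :=
  stmt_8_general P hP Psub hPsub W hW Wk hWk W' hW' l' L hL WkL hWkL
end

section
/- Let P be an arbitrary m×n real matrix of rank r and let P_e be an m×r matrix whose columns are linearly independent and span the same subspace 𝒫 as the columns of P (for example, the nonzero columns of a column echelon form of P). Set W = P_e(P_eᵀP_e)⁻¹P_eᵀ − E_m = [W_k|W'], where W_k is the block of the first k columns of W. Then: (1) if W_k = 0, then for every l ∈ ℒ, d(l,𝒫) = d(ℒ,𝒫) and this distance is attained; (2) if W_k ≠ 0, then for l_pred = (t_pred, l')ᵀ ∈ ℒ there exists p₀ ∈ 𝒫 with d(l_pred, p₀) = d(ℒ,𝒫) if and only if W_k t_pred = −proj_{⟨W_k⟩}(W' l'), where proj_{⟨W_k⟩} is the orthogonal projection onto the column space of W_k. -/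
/-! `Pe (Peᵀ Pe)⁻¹ Peᵀ` is the orthogonal projection onto `𝒫`, so `W x` is minus the component
of `x` orthogonal to `𝒫` and `d(x, 𝒫) = ‖W x‖`. On `ℒ` this is `‖W_k t + W' l'‖`, and minimizing
it over `t` is a least-squares problem in the subspace `⟨W_k⟩`: by Pythagoras the minimum is
`‖W' l' - proj(W' l')‖`, attained exactly when `W_k t = -proj(W' l')`. Each `d(l, 𝒫)` is attained
because `𝒫` is a closed subset of a proper space. When `W_k = 0` the projection vanishes, so every
point of `ℒ` is a minimizer. -/

open Matrix

/-- The identity map viewing a vector in `Fin m → ℝ` as a point of Euclidean space. -/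
def toE {m : ℕ} (x : Fin m → ℝ) : EuclideanSpace ℝ (Fin m) := WithLp.toLp 2 x

namespace Submodule

variable {𝕜 E : Type*} [RCLike 𝕜] [NormedAddCommGroup E] [InnerProductSpace 𝕜 E]
  (K : Submodule 𝕜 E) [K.HasOrthogonalProjection] {u : E}

lemma infDist_eq_norm_sub_starProjection (x : E) :
    Metric.infDist x K = ‖x - K.starProjection x‖ := by
  rw [starProjection_minimal, Metric.infDist_eq_iInf]
  simp [dist_eq_norm]

lemma norm_sub_sq_eq_norm_sub_starProjection_sq_add (hu : u ∈ K) (y : E) :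
    ‖y - u‖ ^ 2 = ‖y - K.starProjection y‖ ^ 2 + ‖K.starProjection y - u‖ ^ 2 := by
  simp only [sq]
  rw [← norm_add_sq_eq_norm_sq_add_norm_sq_of_inner_eq_zero (𝕜 := 𝕜), sub_add_sub_cancel]
  exact K.inner_left_of_mem_orthogonal (K.sub_mem (K.starProjection_apply_mem y) hu)
    (K.sub_starProjection_mem_orthogonal y)

lemma norm_sub_starProjection_le_s10 (hu : u ∈ K) (y : E) : ‖y - K.starProjection y‖ ≤ ‖y - u‖ := by
  refine (pow_le_pow_iff_left₀ (norm_nonneg _) (norm_nonneg _) two_ne_zero).1 ?_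
  rw [K.norm_sub_sq_eq_norm_sub_starProjection_sq_add hu]
  exact le_add_of_nonneg_right (sq_nonneg _)

lemma norm_sub_eq_norm_sub_starProjection_iff_s10 (hu : u ∈ K) (y : E) :
    ‖y - u‖ = ‖y - K.starProjection y‖ ↔ u = K.starProjection y := by
  refine ⟨fun h => ?_, fun h => h ▸ rfl⟩
  have hsq := K.norm_sub_sq_eq_norm_sub_starProjection_sq_add hu y
  rw [h, left_eq_add, sq_eq_zero_iff, norm_eq_zero, sub_eq_zero] at hsq
  exact hsq.symm

end Submodule

section SetDist

variable {X : Type*} [MetricSpace X] {A B : Set X}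

lemma setDist_le_infDist {a : X} (ha : a ∈ A) (hB : B.Nonempty) :
    setDist A B ≤ Metric.infDist a B :=
  (Metric.le_infDist hB).2 fun _ hb =>
    csInf_le ⟨0, by rintro _ ⟨_, _, _, _, rfl⟩; exact dist_nonneg⟩ ⟨a, ha, _, hb, rfl⟩

lemma le_setDist {c : ℝ} (hA : A.Nonempty) (hB : B.Nonempty)
    (h : ∀ a ∈ A, ∀ b ∈ B, c ≤ dist a b) : c ≤ setDist A B :=
  le_csInf (hA.image2 hB) <| by rintro _ ⟨a, ha, b, hb, rfl⟩; exact h a ha b hb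

lemma exists_dist_eq_setDist_iff [ProperSpace X] {a : X} (ha : a ∈ A)
    (hB : IsClosed B) (hBne : B.Nonempty) :
    (∃ b ∈ B, dist a b = setDist A B) ↔ Metric.infDist a B = setDist A B := by
  refine ⟨fun ⟨b, hb, hab⟩ => ?_, fun h => ?_⟩
  · exact le_antisymm ((Metric.infDist_le_dist_of_mem hb).trans_eq hab) (setDist_le_infDist ha hBne)
  · obtain ⟨b, hb, hab⟩ := hB.exists_infDist_eq_dist hBne a
    exact ⟨b, hb, hab ▸ h⟩

end SetDist

section LeastSquares

variable {E ι : Type*} [NormedAddCommGroup E] [InnerProductSpace ℝ E] {S : Set E}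
  {V : Submodule ℝ E} [V.HasOrthogonalProjection] {g φ : ι → E} {y : E}

lemma setDist_range_eq_norm_sub_starProjection (hS : S.Nonempty) (hφ : Set.range φ = V)
    (hg : ∀ t, Metric.infDist (g t) S = ‖φ t + y‖) :
    setDist (Set.range g) S = ‖y - V.starProjection y‖ := by
  have hφ_mem (t : ι) : -φ t ∈ V := V.neg_mem (hφ ▸ Set.mem_range_self t : φ t ∈ (V : Set E))
  have hg' (t : ι) : Metric.infDist (g t) S = ‖y - -φ t‖ := by rw [hg, sub_neg_eq_add, add_comm]
  obtain ⟨t₀, ht₀⟩ : -V.starProjection y ∈ Set.range φ :=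
    hφ ▸ V.neg_mem (V.starProjection_apply_mem y)
  refine le_antisymm ?_ (le_setDist (Set.range_nonempty_iff_nonempty.2 ⟨t₀⟩) hS ?_)
  · calc setDist (Set.range g) S ≤ Metric.infDist (g t₀) S := setDist_le_infDist ⟨t₀, rfl⟩ hS
      _ = ‖y - V.starProjection y‖ := by rw [hg', ht₀, neg_neg]
  · rintro _ ⟨t, rfl⟩ b hb
    calc ‖y - V.starProjection y‖ ≤ ‖y - -φ t‖ := V.norm_sub_starProjection_le_s10 (hφ_mem t) y
      _ = Metric.infDist (g t) S := (hg' t).symm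
      _ ≤ dist (g t) b := Metric.infDist_le_dist_of_mem hb

lemma infDist_eq_setDist_range_iff (hS : S.Nonempty) (hφ : Set.range φ = V)
    (hg : ∀ t, Metric.infDist (g t) S = ‖φ t + y‖) (t : ι) :
    Metric.infDist (g t) S = setDist (Set.range g) S ↔ φ t = -V.starProjection y := by
  have hφ_mem : -φ t ∈ V := V.neg_mem (hφ ▸ Set.mem_range_self t : φ t ∈ (V : Set E))
  rw [setDist_range_eq_norm_sub_starProjection hS hφ hg, hg, add_comm, ← sub_neg_eq_add,
    V.norm_sub_eq_norm_sub_starProjection_iff_s10 hφ_mem, neg_eq_iff_eq_neg]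

end LeastSquares

lemma isUnit_det_transpose_mul_self_s10 {m n : Type*} [Fintype m] [Fintype n] [DecidableEq n]
    {A : Matrix m n ℝ} (hA : Function.Injective A.mulVec) : IsUnit (Aᵀ * A).det :=
  (isUnit_iff_isUnit_det _).1 (PosDef.conjTranspose_mul_self A hA).isUnit

lemma mulVec_append {α : Type*} [NonUnitalNonAssocSemiring α] {m : Type*} {k q : ℕ}
    (A : Matrix m (Fin (k + q)) α) (t : Fin k → α) (s : Fin q → α) :
    A *ᵥ Fin.append t s = (fun i j => A i (Fin.castAdd q j)) *ᵥ t
      + (fun i j => A i (Fin.natAdd k j)) *ᵥ s := by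
  ext i
  simp [mulVec, dotProduct, Fin.sum_univ_add]

def colSpan {m : ℕ} {ι : Type*} (A : Matrix (Fin m) ι ℝ) :
    Submodule ℝ (EuclideanSpace ℝ (Fin m)) :=
  Submodule.span ℝ (Set.range fun j => WithLp.toLp 2 (Aᵀ j))

section ColSpan

variable {m : ℕ} {ι : Type*} [Fintype ι]

lemma toE_mulVec (A : Matrix (Fin m) ι ℝ) (c : ι → ℝ) :
    toE (A *ᵥ c) = ∑ j, c j • WithLp.toLp 2 (Aᵀ j) := by
  ext i
  simp [toE, mulVec, dotProduct, mul_comm]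

lemma mem_colSpan_iff {A : Matrix (Fin m) ι ℝ} {v : EuclideanSpace ℝ (Fin m)} :
    v ∈ colSpan A ↔ ∃ c, toE (A *ᵥ c) = v := by
  simp only [colSpan, Submodule.mem_span_range_iff_exists_fun ℝ, toE_mulVec]

lemma toE_mulVec_mem_colSpan (A : Matrix (Fin m) ι ℝ) (c : ι → ℝ) : toE (A *ᵥ c) ∈ colSpan A :=
  mem_colSpan_iff.2 ⟨c, rfl⟩

lemma colSpan_zero : colSpan (0 : Matrix (Fin m) ι ℝ) = ⊥ := by
  ext v
  simp [mem_colSpan_iff, toE, eq_comm]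

lemma toE_mem_orthogonal_colSpan_iff {A : Matrix (Fin m) ι ℝ} {x : Fin m → ℝ} :
    toE x ∈ (colSpan A)ᗮ ↔ Aᵀ *ᵥ x = 0 := by
  have inner_eq (c : ι → ℝ) : inner ℝ (toE (A *ᵥ c)) (toE x) = (Aᵀ *ᵥ x) ⬝ᵥ c := by
    rw [EuclideanSpace.inner_eq_star_dotProduct]
    simp [toE, dotProduct_mulVec, vecMul_transpose, dotProduct_comm]
  simp only [Submodule.mem_orthogonal, mem_colSpan_iff, forall_exists_index,
    forall_apply_eq_imp_iff, inner_eq, dotProduct_eq_zero_iff]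

lemma toE_projMatrix_mulVec [DecidableEq ι] {A : Matrix (Fin m) ι ℝ}
    (hA : Function.Injective A.mulVec) (x : Fin m → ℝ) :
    toE ((A * (Aᵀ * A)⁻¹ * Aᵀ) *ᵥ x) = (colSpan A).starProjection (toE x) := by
  refine (Submodule.eq_starProjection_of_mem_orthogonal ?_ ?_).symm
  · rw [Matrix.mul_assoc, ← mulVec_mulVec]
    exact toE_mulVec_mem_colSpan A _
  · change toE (x - (A * (Aᵀ * A)⁻¹ * Aᵀ) *ᵥ x) ∈ _
    rw [toE_mem_orthogonal_colSpan_iff, mulVec_sub, mulVec_mulVec, ← Matrix.mul_assoc,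
      ← Matrix.mul_assoc, mul_nonsing_inv _ (isUnit_det_transpose_mul_self_s10 hA), Matrix.one_mul,
      sub_self]

lemma infDist_toE_colSpan [DecidableEq ι] {A : Matrix (Fin m) ι ℝ}
    (hA : Function.Injective A.mulVec) (x : Fin m → ℝ) :
    Metric.infDist (toE x) (colSpan A) = ‖toE ((A * (Aᵀ * A)⁻¹ * Aᵀ - 1) *ᵥ x)‖ := by
  rw [Submodule.infDist_eq_norm_sub_starProjection, ← toE_projMatrix_mulVec hA, norm_sub_rev,
    sub_mulVec, one_mulVec]
  rfl

end ColSpan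

theorem stmt_10_general {k q rk : ℕ}
    (Pe : Matrix (Fin (k + q)) (Fin rk) ℝ)
    (hPe : LinearIndependent ℝ (fun j : Fin rk => (WithLp.toLp 2 (Peᵀ j) : EuclideanSpace ℝ (Fin (k + q)))))
    (Psub : Submodule ℝ (EuclideanSpace ℝ (Fin (k + q))))
    (hspan : Submodule.span ℝ
        (Set.range fun j : Fin rk => (WithLp.toLp 2 (Peᵀ j) : EuclideanSpace ℝ (Fin (k + q)))) = Psub)
    (W : Matrix (Fin (k + q)) (Fin (k + q)) ℝ)
    (hW : W = Pe * (Peᵀ * Pe)⁻¹ * Peᵀ - 1)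
    (Wk : Matrix (Fin (k + q)) (Fin k) ℝ) (hWk : Wk = fun i j => W i (Fin.castAdd q j))
    (W' : Matrix (Fin (k + q)) (Fin q) ℝ) (hW' : W' = fun i j => W i (Fin.natAdd k j))
    (WkSpan : Submodule ℝ (EuclideanSpace ℝ (Fin (k + q))))
    (hWkSpan : WkSpan = Submodule.span ℝ
      (Set.range fun j : Fin k => (WithLp.toLp 2 (Wkᵀ j) : EuclideanSpace ℝ (Fin (k + q)))))
    (l' : Fin q → ℝ)
    (L : Set (EuclideanSpace ℝ (Fin (k + q))))
    (hL : L = {x : EuclideanSpace ℝ (Fin (k + q)) | ∃ t : Fin k → ℝ, x = Fin.append t l'}) :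
    (Wk = 0 → ∀ l ∈ L,
      Metric.infDist l ↑Psub = setDist L ↑Psub ∧
      ∃ p ∈ Psub, dist l p = setDist L ↑Psub) ∧
    (Wk ≠ 0 → ∀ (tpred : Fin k → ℝ) (lpred : EuclideanSpace ℝ (Fin (k + q))),
      lpred = Fin.append tpred l' →
      ((∃ p₀ ∈ Psub, dist lpred p₀ = setDist L ↑Psub) ↔
        toE (Wk.mulVec tpred) =
          -(Submodule.orthogonalProjectionOnto WkSpan (toE (W'.mulVec l')) :
            EuclideanSpace ℝ (Fin (k + q))))) := by
  have hPe_inj : Function.Injective Pe.mulVec :=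
    mulVec_injective_iff.2 (hPe.of_comp (WithLp.linearEquiv 2 ℝ _).symm.toLinearMap)
  set g : (Fin k → ℝ) → EuclideanSpace ℝ (Fin (k + q)) := fun t => toE (Fin.append t l')
  replace hL : L = Set.range g := by
    subst hL
    ext x
    exact exists_congr fun t => ⟨fun h => (congrArg (WithLp.toLp 2) h).symm, fun h => h ▸ rfl⟩
  subst hL
  have hdist (t : Fin k → ℝ) : Metric.infDist (g t) Psub = ‖toE (Wk *ᵥ t) + toE (W' *ᵥ l')‖ := by
    rw [← hspan, ← colSpan, infDist_toE_colSpan hPe_inj, ← hW, mulVec_append, ← hWk, ← hW']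
    rfl
  have hrange : Set.range (fun t => toE (Wk *ᵥ t)) = WkSpan := by
    subst hWkSpan
    ext v
    exact mem_colSpan_iff.symm
  have hPsub_closed : IsClosed (Psub : Set (EuclideanSpace ℝ (Fin (k + q)))) :=
    Psub.closed_of_finiteDimensional
  have hPsub_ne : (Psub : Set (EuclideanSpace ℝ (Fin (k + q)))).Nonempty := ⟨0, Psub.zero_mem⟩
  have key := infDist_eq_setDist_range_iff hPsub_ne hrange hdist
  refine ⟨fun hWk0 => ?_, fun _ tpred lpred hlpred => ?_⟩
  · rintro _ ⟨t, rfl⟩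
    have hinf := (key t).2 (by
      rw [hWkSpan, ← colSpan, hWk0, colSpan_zero]
      simp [toE])
    exact ⟨hinf, (exists_dist_eq_setDist_iff (Set.mem_range_self t) hPsub_closed hPsub_ne).2 hinf⟩
  · obtain rfl : lpred = g tpred := congrArg (WithLp.toLp 2) hlpred
    rw [← Submodule.starProjection_apply]
    exact (exists_dist_eq_setDist_iff (Set.mem_range_self tpred) hPsub_closed hPsub_ne).trans
      (key tpred)

/-- Proposition 5: `P` is an arbitrary `m × n` matrix of rank `r` and `P_e` is an `m × r`
matrix with linearly independent columns spanning the same subspace `𝒫` as the columns of `P`.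
With `W = P_e(P_eᵀP_e)⁻¹P_eᵀ − E_m = [W_k|W']`:
(1) if `W_k = 0`, then for every `l ∈ ℒ`, `d(l,𝒫) = d(ℒ,𝒫)` and this distance is attained;
(2) if `W_k ≠ 0`, then `l_pred = (t_pred,l')ᵀ ∈ ℒ` attains `d(ℒ,𝒫)` iff
`W_k t_pred = −proj_{⟨W_k⟩}(W'l')`. -/
theorem stmt_10 {k q n rk : ℕ} (hk : 1 ≤ k) (hq : 1 ≤ q)
    (P : Matrix (Fin (k + q)) (Fin n) ℝ) (hrank : P.rank = rk)
    (Pe : Matrix (Fin (k + q)) (Fin rk) ℝ)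
    (hPe : LinearIndependent ℝ (fun j : Fin rk => (WithLp.toLp 2 (Peᵀ j) : EuclideanSpace ℝ (Fin (k + q)))))
    (Psub : Submodule ℝ (EuclideanSpace ℝ (Fin (k + q))))
    (hPsub : Psub = Submodule.span ℝ
      (Set.range fun j : Fin n => (WithLp.toLp 2 (Pᵀ j) : EuclideanSpace ℝ (Fin (k + q)))))
    (hspan : Submodule.span ℝ
        (Set.range fun j : Fin rk => (WithLp.toLp 2 (Peᵀ j) : EuclideanSpace ℝ (Fin (k + q)))) = Psub)
    (W : Matrix (Fin (k + q)) (Fin (k + q)) ℝ)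
    (hW : W = Pe * (Peᵀ * Pe)⁻¹ * Peᵀ - 1)
    (Wk : Matrix (Fin (k + q)) (Fin k) ℝ) (hWk : Wk = fun i j => W i (Fin.castAdd q j))
    (W' : Matrix (Fin (k + q)) (Fin q) ℝ) (hW' : W' = fun i j => W i (Fin.natAdd k j))
    (WkSpan : Submodule ℝ (EuclideanSpace ℝ (Fin (k + q))))
    (hWkSpan : WkSpan = Submodule.span ℝ
      (Set.range fun j : Fin k => (WithLp.toLp 2 (Wkᵀ j) : EuclideanSpace ℝ (Fin (k + q)))))
    (l' : Fin q → ℝ)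
    (L : Set (EuclideanSpace ℝ (Fin (k + q))))
    (hL : L = {x : EuclideanSpace ℝ (Fin (k + q)) | ∃ t : Fin k → ℝ, x = Fin.append t l'}) :
    (Wk = 0 → ∀ l ∈ L,
      Metric.infDist l ↑Psub = setDist L ↑Psub ∧
      ∃ p ∈ Psub, dist l p = setDist L ↑Psub) ∧
    (Wk ≠ 0 → ∀ (tpred : Fin k → ℝ) (lpred : EuclideanSpace ℝ (Fin (k + q))),
      lpred = Fin.append tpred l' →
      ((∃ p₀ ∈ Psub, dist lpred p₀ = setDist L ↑Psub) ↔
        toE (Wk.mulVec tpred) =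
          -(Submodule.orthogonalProjectionOnto WkSpan (toE (W'.mulVec l')) :
            EuclideanSpace ℝ (Fin (k + q))))) :=
  stmt_10_general Pe hPe Psub hspan W hW Wk hWk W' hW' WkSpan hWkSpan l' L hL
end
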